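/- arXiv:1904.01543 — 5 statements merged into one kernel-verified Lean document; each statement's English description precedes it below -/
import Mathlib

section
/- For any finite graph G and any k ≥ 2, if two k-tuples of vertices receive the same color under the δ-k-WL coloring at iteration i (which records local/global flags for each neighbor substitution), then they receive the same color under the k-WL coloring at iteration i. Consequently, the δ-k-WL distinguishes every pair of non-isomorphic graphs that the k-WL distinguishes. -/
/-- Base color: ordered isomorphism type of the induced subgraph on a `k`-tuple. -/
def Base (k : ℕ) : Type := Fin k → Fin k → Bool × Bool

instance (k : ℕ) : DecidableEq (Base k) := by unfold Base; infer_instance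

def atp {V : Type} [DecidableEq V] (G : SimpleGraph V) [DecidableRel G.Adj] {k : ℕ}
    (v : Fin k → V) : Base k :=
  fun i j => (decide (v i = v j), decide (G.Adj (v i) (v j)))

/-- Color domain of the `k`-WL at iteration `i`. -/
def ColT (k : ℕ) : ℕ → Type
  | 0 => Base k
  | i+1 => ColT k i × Multiset (Fin k → ColT k i)

def kWL {V : Type} [Fintype V] [DecidableEq V] (G : SimpleGraph V) [DecidableRel G.Adj] {k : ℕ} :
    (i : ℕ) → (Fin k → V) → ColT k i
  | 0, v => atp G v
  | i+1, v => (kWL G i v,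
      (Finset.univ.val : Multiset V).map (fun w => fun j => kWL G i (Function.update v j w)))

/-- Color domain of the δ-k-WL at iteration `i`. -/
def ColTd (k : ℕ) : ℕ → Type
  | 0 => Base k
  | i+1 => ColTd k i × Multiset (Fin k → ColTd k i × Bool)

def dkWL {V : Type} [Fintype V] [DecidableEq V] (G : SimpleGraph V) [DecidableRel G.Adj] {k : ℕ} :
    (i : ℕ) → (Fin k → V) → ColTd k i
  | 0, v => atp G v
  | i+1, v => (dkWL G i v,
      (Finset.univ.val : Multiset V).map (fun w => fun j =>
        (dkWL G i (Function.update v j w), decide (G.Adj (v j) w))))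

/-- Color domain of the local δ-k-LWL at iteration `i`. -/
def ColTL (k : ℕ) : ℕ → Type
  | 0 => Base k
  | i+1 => ColTL k i × Multiset (Finset (ColTL k i × Fin k))

def colTLDecEq (k : ℕ) : (i : ℕ) → DecidableEq (ColTL k i)
  | 0 => inferInstanceAs (DecidableEq (Base k))
  | i+1 => letI := colTLDecEq k i
           inferInstanceAs (DecidableEq (ColTL k i × Multiset (Finset (ColTL k i × Fin k))))

instance (k i : ℕ) : DecidableEq (ColTL k i) := colTLDecEq k i

def lWL {V : Type} [Fintype V] [DecidableEq V] (G : SimpleGraph V) [DecidableRel G.Adj] {k : ℕ} :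
    (i : ℕ) → (Fin k → V) → ColTL k i
  | 0, v => atp G v
  | i+1, v => (lWL G i v,
      (Finset.univ.val : Multiset V).map (fun w =>
        (Finset.univ.filter (fun j : Fin k => G.Adj (v j) w)).image
          (fun j => (lWL G i (Function.update v j w), j))))

/-- Color domain of the 1-WL variant `C^{1,*}` on the `k`-tuple graph. -/
def SColT (k : ℕ) : ℕ → Type
  | 0 => Base k
  | i+1 => SColT k i × Multiset (Finset (SColT k i × Fin k × Bool))

def sColTDecEq (k : ℕ) : (i : ℕ) → DecidableEq (SColT k i)
  | 0 => inferInstanceAs (DecidableEq (Base k))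
  | i+1 => letI := sColTDecEq k i
           inferInstanceAs (DecidableEq (SColT k i × Multiset (Finset (SColT k i × Fin k × Bool))))

instance (k i : ℕ) : DecidableEq (SColT k i) := sColTDecEq k i

def starWL {V : Type} [Fintype V] [DecidableEq V] (G : SimpleGraph V) [DecidableRel G.Adj] {k : ℕ} :
    (i : ℕ) → (Fin k → V) → SColT k i
  | 0, s => atp G s
  | i+1, s => (starWL G i s,
      (Finset.univ.val : Multiset V).map (fun w =>
        Finset.univ.image (fun j : Fin k =>
          (starWL G i (Function.update s j w), j, decide (G.Adj (s j) w)))))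

/-- Canonical encoding of the depth-`i` unrolled tree of the (global) `k`-tuple graph. -/
def UT (V : Type) (k : ℕ) : ℕ → Type
  | 0 => Base k
  | i+1 => Base k × Multiset ((Fin k × Bool × V) × UT V k i)

def unrollT {V : Type} [Fintype V] [DecidableEq V] (G : SimpleGraph V) [DecidableRel G.Adj] {k : ℕ} :
    (i : ℕ) → (Fin k → V) → UT V k i
  | 0, s => atp G s
  | i+1, s => (atp G s,
      (Finset.univ.val : Multiset (Fin k × V)).map (fun p =>
        ((p.1, decide (G.Adj (s p.1) p.2), p.2), unrollT G i (Function.update s p.1 p.2))))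

def truncUT {V : Type} {k : ℕ} : (i : ℕ) → UT V k (i+1) → UT V k i
  | 0, t => t.1
  | i+1, t => (t.1, t.2.map (fun p => (p.1, truncUT i p.2)))

def rootcol {V : Type} [Fintype V] [DecidableEq V] {k : ℕ} : (i : ℕ) → UT V k i → SColT k i
  | 0, t => t
  | i+1, t =>
    (rootcol i (truncUT i t),
     (Finset.univ.val : Multiset V).map (fun w =>
       ((t.2.filter (fun p => p.1.2.2 = w)).map (fun p => (rootcol i p.2, p.1.1, p.1.2.1))).toFinset))

/-- Canonical encoding of the depth-`i` unrolled tree of the local `k`-tuple graph. -/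
def UTL (V : Type) (k : ℕ) : ℕ → Type
  | 0 => Base k
  | i+1 => Base k × Multiset ((Fin k × V) × UTL V k i)

def unrollTL {V : Type} [Fintype V] [DecidableEq V] (G : SimpleGraph V) [DecidableRel G.Adj] {k : ℕ} :
    (i : ℕ) → (Fin k → V) → UTL V k i
  | 0, s => atp G s
  | i+1, s => (atp G s,
      ((Finset.univ.filter (fun p : Fin k × V => G.Adj (s p.1) p.2)).val).map (fun p =>
        (p, unrollTL G i (Function.update s p.1 p.2))))

/-- Color domain of the 1-WL (with labels in `L`) at iteration `i`. -/
def Col1 (L : Type) : ℕ → Type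
  | 0 => L
  | i+1 => Col1 L i × Multiset (Col1 L i)

def oneWL {V : Type} [Fintype V] [DecidableEq V] (G : SimpleGraph V) [DecidableRel G.Adj]
    {L : Type} (l : V → L) : (i : ℕ) → V → Col1 L i
  | 0, v => l v
  | i+1, v => (oneWL G l i v, (G.neighborFinset v).val.map (oneWL G l i))

/-- Canonical encoding of finite rooted directed labeled trees of depth at most `d`. -/
def LTr (L : Type) : ℕ → Type
  | 0 => L
  | d+1 => L × Multiset (LTr L d)

def labelOf {L : Type} : (d : ℕ) → LTr L d → L
  | 0, t => t
  | _+1, t => t.1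

def truncLT {L : Type} : (d i : ℕ) → LTr L d → LTr L i
  | d, 0, t => labelOf d t
  | 0, i+1, t => (t, 0)
  | d+1, i+1, t => (t.1, t.2.map (truncLT d i))

def rc {L : Type} : (d i : ℕ) → LTr L d → Col1 L i
  | d, 0, t => labelOf d t
  | 0, i+1, t => (rc 0 i t, 0)
  | d+1, i+1, t => (rc (d+1) i t, t.2.map (rc d i))

/-- δ-1-WL color domain. -/
def ColD : ℕ → Type
  | 0 => Unit
  | i+1 => ColD i × Multiset (ColD i × Bool)

def d1WL {V : Type} [Fintype V] [DecidableEq V] (G : SimpleGraph V) [DecidableRel G.Adj] :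
    (i : ℕ) → V → ColD i
  | 0, _ => ()
  | i+1, v => (d1WL G i v,
      (Finset.univ.val : Multiset V).map (fun w => (d1WL G i w, decide (G.Adj v w))))

/-- Canonical encoding of the unlabeled depth-`i` unrolled tree around a vertex. -/
def U : ℕ → Type
  | 0 => Unit
  | i+1 => Multiset (U i)

def unroll {V : Type} [Fintype V] [DecidableEq V] (G : SimpleGraph V) [DecidableRel G.Adj] :
    (i : ℕ) → V → U i
  | 0, _ => ()
  | i+1, v => (G.neighborFinset v).val.map (unroll G i)

def Mi {V : Type} [Fintype V] [DecidableEq V] (G : SimpleGraph V) [DecidableRel G.Adj] {k : ℕ}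
    (i : ℕ) (v : Fin k → V) : Multiset (Fin k → ColT k i) :=
  (Finset.univ.val : Multiset V).map (fun w => fun j => kWL G i (Function.update v j w))

def Mdi {V : Type} [Fintype V] [DecidableEq V] (G : SimpleGraph V) [DecidableRel G.Adj] {k : ℕ}
    (i : ℕ) (v : Fin k → V) : Multiset (Fin k → ColTd k i × Bool) :=
  (Finset.univ.val : Multiset V).map (fun w => fun j =>
    (dkWL G i (Function.update v j w), decide (G.Adj (v j) w)))


/-!
Dropping the adjacency flags from a δ-k-WL colour yields the k-WL colour of the same tuple
(induction on the iteration). Hence every k-WL colour class is a union of δ-k-WL colour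
classes, and graphs with equally large δ-k-WL classes have equally large k-WL classes.
-/

def forgetFlags (k : ℕ) : (i : ℕ) → ColTd k i → ColT k i
  | 0, c => c
  | i+1, c => (forgetFlags k i c.1, c.2.map fun g j => forgetFlags k i (g j).1)

theorem forgetFlags_dkWL {V : Type} [Fintype V] [DecidableEq V] (G : SimpleGraph V)
    [DecidableRel G.Adj] {k : ℕ} :
    ∀ (i : ℕ) (v : Fin k → V), forgetFlags k i (dkWL G i v) = kWL G i v
  | 0, _ => rfl
  | i+1, v => by
    rw [forgetFlags, dkWL, kWL, Multiset.map_map]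
    congr 1
    · exact forgetFlags_dkWL G i v
    · refine Multiset.map_congr rfl fun w _ => funext fun j => ?_
      exact forgetFlags_dkWL G i _

theorem Nat.card_fiber_comp_eq {X Y C D : Type*} [Finite X] [Finite Y] {f : X → C} {g : Y → C}
    (h : ∀ c, Nat.card {x // f x = c} = Nat.card {y // g y = c}) (p : C → D) (d : D) :
    Nat.card {x // p (f x) = d} = Nat.card {y // p (g y) = d} := by
  have fiberEquiv c : {x // f x = c} ≃ {y // g y = c} := (Finite.card_eq.mp (h c)).some
  exact Nat.card_congr <| (Equiv.ofFiberEquiv fiberEquiv).subtypeEquiv fun x => by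
    rw [Equiv.ofFiberEquiv_map fiberEquiv x]

theorem stmt0_general {V W : Type} [Fintype V] [DecidableEq V] [Fintype W] [DecidableEq W]
    (G : SimpleGraph V) [DecidableRel G.Adj] (H : SimpleGraph W) [DecidableRel H.Adj]
    (k : ℕ) :
    (∀ (i : ℕ) (s t : Fin k → V), dkWL G i s = dkWL G i t → kWL G i s = kWL G i t) ∧
    ((∃ (i : ℕ) (c : ColT k i),
        Nat.card {v : Fin k → V // kWL G i v = c} ≠ Nat.card {w : Fin k → W // kWL H i w = c}) →
      (∃ (i : ℕ) (c : ColTd k i),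
        Nat.card {v : Fin k → V // dkWL G i v = c} ≠
          Nat.card {w : Fin k → W // dkWL H i w = c})) := by
  refine ⟨fun i s t h => by rw [← forgetFlags_dkWL G i s, ← forgetFlags_dkWL G i t, h], ?_⟩
  rintro ⟨i, c, hkWL⟩
  by_contra! hdkWL
  apply hkWL
  simp_rw [← forgetFlags_dkWL G i, ← forgetFlags_dkWL H i]
  exact Nat.card_fiber_comp_eq (hdkWL i) (forgetFlags k i) c

/-- δ-k-WL refines k-WL at every iteration; consequently δ-k-WL
distinguishes every pair of non-isomorphic graphs that k-WL distinguishes. -/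
theorem stmt0 {V W : Type} [Fintype V] [DecidableEq V] [Fintype W] [DecidableEq W]
    (G : SimpleGraph V) [DecidableRel G.Adj] (H : SimpleGraph W) [DecidableRel H.Adj]
    (k : ℕ) (hk : 2 ≤ k) :
    (∀ (i : ℕ) (s t : Fin k → V), dkWL G i s = dkWL G i t → kWL G i s = kWL G i t) ∧
    ((∃ (i : ℕ) (c : ColT k i),
        Nat.card {v : Fin k → V // kWL G i v = c} ≠ Nat.card {w : Fin k → W // kWL H i w = c}) →
      (∃ (i : ℕ) (c : ColTd k i),
        Nat.card {v : Fin k → V // dkWL G i v = c} ≠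
          Nat.card {w : Fin k → W // dkWL H i w = c})) :=
  stmt0_general G H k
end

section
/- The 1-WL distinguishes any two non-isomorphic finite rooted directed labeled trees: if T and T' are finite directed labeled trees rooted at r and r' respectively, and the stable 1-WL colors of r in T and r' in T' agree (running 1-WL in parallel on both trees using out-neighborhoods), then T and T' are isomorphic as rooted labeled trees. -/
/-! The 1-WL color of the root at any iteration still records the root label, and at iteration
`i + 1` it records the multiset of iteration-`i` colors of the children. By induction on the
depth, colors at an iteration at least the depth determine subtrees, and `Multiset.map` along an
injective map is injective, so the children's colors determine the multiset of children. -/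

def Col1.label {L : Type} : (i : ℕ) → Col1 L i → L
  | 0, c => c
  | i+1, c => label i c.1

theorem Col1.label_rc {L : Type} : ∀ (d i : ℕ) (t : LTr L d), label i (rc d i t) = labelOf d t
  | 0, 0, _ => rfl
  | _+1, 0, _ => rfl
  | 0, i+1, t => label_rc 0 i t
  | d+1, i+1, t => label_rc (d+1) i t

theorem rc_injective {L : Type} : ∀ {d i : ℕ}, d ≤ i → Function.Injective (rc (L := L) d i)
  | 0, 0, _ => fun _ _ h => h
  | 0, _+1, _ => fun _ _ h => rc_injective (Nat.zero_le _) (Prod.mk.inj h).1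
  | d+1, i+1, hdi => fun t t' h => by
      obtain ⟨hroot, hchildren⟩ := Prod.mk.inj h
      have hlabel := congrArg (Col1.label i) hroot
      rw [Col1.label_rc, Col1.label_rc] at hlabel
      exact Prod.ext hlabel
        (Multiset.map_injective (rc_injective (Nat.le_of_succ_le_succ hdi)) hchildren)

/-- Trees of depth at most `d` are encoded canonically in `LTr L d`, so equality is rooted labeled
tree isomorphism; `rc d i t` is the 1-WL color of the root of `t` at iteration `i`. -/
theorem stmt5 {L : Type} (d i : ℕ) (hdi : d ≤ i) (t t' : LTr L d)
    (h : rc d i t = rc d i t') : t = t' :=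
  rc_injective hdi h
end

section
/- Let G be a finite graph and let T^k(G) be its k-tuple graph. Then for all k-tuples s, t ∈ V(G)^k and all i ≥ 0, the δ-k-WL colors satisfy C^{k,δ,δ̄}_i(s) = C^{k,δ,δ̄}_i(t) if and only if C^{1,*}_i(v_s) = C^{1,*}_i(v_t), where C^{1,*} is the 1-WL variant on T^k(G) that refines a vertex's color by the multiset, over exchanged vertices w ∈ V(G), of the sets {(C^{1,*}_i(v_u), j, flag) : edge (v_t,v_u) has exchanged vertex w and label (j, flag)}. -/
/-! Induction on `i`. Since each edge label carries its position `j`, the set of labelled edges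
with a given exchanged vertex is the graph of the function `j ↦ (color, flag)` that δ-k-WL records;
so, given the statement at `i`, both refinements compare exchanged vertices by the same equivalence,
and multisets of images under two maps with the same kernel are equal simultaneously. -/

theorem Multiset.map_eq_map_of_factorsThrough {α β γ : Type*} {f : α → β} {g : α → γ}
    (hgf : g.FactorsThrough f) {m m' : Multiset α} (h : m.map f = m'.map f) :
    m.map g = m'.map g := by
  rcases isEmpty_or_nonempty α with hα | ⟨⟨a⟩⟩
  · rw [eq_zero_of_forall_notMem (s := m) isEmptyElim, eq_zero_of_forall_notMem (s := m') isEmptyElim]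
  · rw [← hgf.extend_comp (fun _ => g a), ← map_map, ← map_map, h]

theorem Multiset.map_eq_map_iff_of_ker_eq {α β γ : Type*} {f : α → β} {g : α → γ}
    (hfg : ∀ x y, f x = f y ↔ g x = g y) {m m' : Multiset α} :
    m.map f = m'.map f ↔ m.map g = m'.map g :=
  ⟨map_eq_map_of_factorsThrough fun x y => (hfg x y).mp,
    map_eq_map_of_factorsThrough fun x y => (hfg x y).mpr⟩

theorem Finset.image_univ_tagged_eq_iff {ι X Y : Type*} [Fintype ι] [DecidableEq ι]
    [DecidableEq X] [DecidableEq Y] {c c' : ι → X} {b b' : ι → Y} :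
    univ.image (fun j => (c j, j, b j)) = univ.image (fun j => (c' j, j, b' j)) ↔
      c = c' ∧ b = b' := by
  refine ⟨fun h => ?_, fun ⟨rfl, rfl⟩ => rfl⟩
  have tagged : ∀ j, c j = c' j ∧ b j = b' j := fun j => by
    have hj : (c j, j, b j) ∈ univ.image (fun j => (c' j, j, b' j)) :=
      h ▸ mem_image_of_mem _ (mem_univ j)
    obtain ⟨j', -, hj'⟩ := mem_image.mp hj
    simp only [Prod.mk.injEq] at hj'
    obtain ⟨hc, rfl, hb⟩ := hj'
    exact ⟨hc.symm, hb.symm⟩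
  exact ⟨funext fun j => (tagged j).1, funext fun j => (tagged j).2⟩

section EdgeColors

variable {V : Type} [Fintype V] [DecidableEq V] (G : SimpleGraph V) [DecidableRel G.Adj] {k : ℕ}

def dkEdgeColor (i : ℕ) (p : (Fin k → V) × V) : Fin k → ColTd k i × Bool :=
  fun j => (dkWL G i (Function.update p.1 j p.2), decide (G.Adj (p.1 j) p.2))

/-- For `p = (s, w)`: the set `{(C^{1,*}_i(v_u), j, flag)}` over the edges `(v_s, v_u)` of `T^k(G)`
with exchanged vertex `w` and label `(j, flag)`. -/
def starEdgeColor (i : ℕ) (p : (Fin k → V) × V) : Finset (SColT k i × Fin k × Bool) :=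
  Finset.univ.image fun j =>
    (starWL G i (Function.update p.1 j p.2), j, decide (G.Adj (p.1 j) p.2))

theorem dkWL_succ_eq_iff {i : ℕ} {s t : Fin k → V} :
    dkWL G (i + 1) s = dkWL G (i + 1) t ↔ dkWL G i s = dkWL G i t ∧
      ((Finset.univ.val : Multiset V).map (s, ·)).map (dkEdgeColor G i) =
        ((Finset.univ.val : Multiset V).map (t, ·)).map (dkEdgeColor G i) := by
  rw [Multiset.map_map, Multiset.map_map]
  exact Prod.ext_iff

theorem starWL_succ_eq_iff {i : ℕ} {s t : Fin k → V} :
    starWL G (i + 1) s = starWL G (i + 1) t ↔ starWL G i s = starWL G i t ∧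
      ((Finset.univ.val : Multiset V).map (s, ·)).map (starEdgeColor G i) =
        ((Finset.univ.val : Multiset V).map (t, ·)).map (starEdgeColor G i) := by
  rw [Multiset.map_map, Multiset.map_map]
  exact Prod.ext_iff

theorem dkEdgeColor_eq_iff_starEdgeColor_eq {i : ℕ}
    (ih : ∀ s t : Fin k → V, dkWL G i s = dkWL G i t ↔ starWL G i s = starWL G i t)
    (p q : (Fin k → V) × V) :
    dkEdgeColor G i p = dkEdgeColor G i q ↔ starEdgeColor G i p = starEdgeColor G i q := by
  simp only [dkEdgeColor, starEdgeColor, Finset.image_univ_tagged_eq_iff, funext_iff,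
    Prod.mk.injEq, ih, forall_and]

end EdgeColors

/-- the δ-k-WL on tuples is equivalent to the 1-WL variant `C^{1,*}`
on the k-tuple graph. -/
theorem stmt7 {V : Type} [Fintype V] [DecidableEq V]
    (G : SimpleGraph V) [DecidableRel G.Adj] (k : ℕ) :
    ∀ (i : ℕ) (s t : Fin k → V), dkWL G i s = dkWL G i t ↔ starWL G i s = starWL G i t := by
  intro i
  induction i with
  | zero => exact fun _ _ => Iff.rfl
  | succ i ih =>
    intro s t
    rw [dkWL_succ_eq_iff, starWL_succ_eq_iff, ih,
      Multiset.map_eq_map_iff_of_ker_eq (dkEdgeColor_eq_iff_starEdgeColor_eq G ih)]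
end

section
/- For k = 1, the δ-variant and the classical Weisfeiler-Leman algorithm induce the same partitions: for every finite graph G, every i ≥ 0 and all vertices u, v, the classical 1-WL colors of u and v at iteration i agree if and only if their δ-1-WL colors (which record, for each vertex w, the color of w together with the flag of whether w is adjacent) at iteration i agree. -/
/-!
Induction on the iteration. If the two colourings at iteration `i` have the same kernel, each
factors through the other, so they identify the same pairs of neighbourhood multisets. The
δ-multiset of `u` is the multiset of neighbour colours tagged `true` plus that of non-neighbour
colours tagged `false`, and the latter is the multiset of all colours minus the former; so two
δ-multisets agree exactly when the neighbour-colour multisets agree, which is the classical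
refinement step.
-/

namespace Multiset

variable {α β γ : Type*}

theorem map_eq_map_of_factorsThrough_s15 {f : α → β} {g : α → γ} (hgf : g.FactorsThrough f)
    {s t : Multiset α} (h : s.map f = t.map f) : s.map g = t.map g := by
  have hg (u : Multiset α) :
      u.map (some ∘ g) = (u.map f).map (Function.extend f (some ∘ g) fun _ => none) := by
    rw [map_map]
    exact map_congr rfl fun a _ => ((hgf.comp_left some).extend_apply _ a).symm
  apply map_injective (Option.some_injective γ)
  rw [map_map, map_map, hg, hg, h]

theorem map_prod_decide_eq (s : Multiset α) (c : α → β) (p : α → Prop) [DecidablePred p] :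
    s.map (fun a => (c a, decide (p a)))
      = ((s.filter p).map c).map (·, true) + ((s.filter (¬ p ·)).map c).map (·, false) := by
  conv_lhs => rw [← filter_add_not p s]
  rw [map_add, map_map, map_map]
  congr 1 <;> refine map_congr rfl fun a ha => ?_ <;> simp_all [mem_filter]

theorem map_prod_decide_eq_iff (s : Multiset α) (c : α → β) (p q : α → Prop)
    [DecidablePred p] [DecidablePred q] :
    s.map (fun a => (c a, decide (p a))) = s.map (fun a => (c a, decide (q a)))
      ↔ (s.filter p).map c = (s.filter q).map c := by
  constructor
  · intro h
    have key : ∀ (r : α → Prop) [DecidablePred r], (s.filter r).map c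
        = ((s.map (fun a => (c a, decide (r a)))).filter (·.2 = true)).map Prod.fst := by
      intro r _
      rw [filter_map, map_map]
      simp
    rw [key p, key q, h]
  · intro h
    have hcompl : (s.filter (¬ p ·)).map c = (s.filter (¬ q ·)).map c := by
      have := congrArg (map c) ((filter_add_not p s).trans (filter_add_not q s).symm)
      rwa [map_add, map_add, h, add_right_inj] at this
    rw [map_prod_decide_eq, map_prod_decide_eq, h, hcompl]

end Multiset

section WeisfeilerLeman

variable {V : Type} [Fintype V] [DecidableEq V] (G : SimpleGraph V) [DecidableRel G.Adj]

theorem oneWL_succ_eq_iff {L : Type} (l : V → L) (i : ℕ) (u v : V) :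
    oneWL G l (i + 1) u = oneWL G l (i + 1) v ↔ oneWL G l i u = oneWL G l i v ∧
      (G.neighborFinset u).val.map (oneWL G l i) = (G.neighborFinset v).val.map (oneWL G l i) :=
  Prod.mk_inj

theorem d1WL_succ_eq_iff (i : ℕ) (u v : V) :
    d1WL G (i + 1) u = d1WL G (i + 1) v ↔ d1WL G i u = d1WL G i v ∧
      (G.neighborFinset u).val.map (d1WL G i) = (G.neighborFinset v).val.map (d1WL G i) := by
  refine Prod.mk_inj.trans (and_congr Iff.rfl ?_)
  rw [Multiset.map_prod_decide_eq_iff, G.neighborFinset_eq_filter, G.neighborFinset_eq_filter,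
    Finset.filter_val, Finset.filter_val]

end WeisfeilerLeman

/-- for `k = 1`, the δ-variant and the classical Weisfeiler-Leman algorithm
induce the same partitions at every iteration. -/
theorem stmt15 {V : Type} [Fintype V] [DecidableEq V]
    (G : SimpleGraph V) [DecidableRel G.Adj] :
    ∀ (i : ℕ) (u v : V),
      oneWL G (fun _ => ()) i u = oneWL G (fun _ => ()) i v ↔ d1WL G i u = d1WL G i v := by
  intro i
  induction i with
  | zero => exact fun _ _ => iff_of_true rfl rfl
  | succ i ih =>
    intro u v
    rw [oneWL_succ_eq_iff, d1WL_succ_eq_iff]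
    exact and_congr (ih u v)
      ⟨Multiset.map_eq_map_of_factorsThrough_s15 fun a b => (ih a b).1,
        Multiset.map_eq_map_of_factorsThrough_s15 fun a b => (ih a b).2⟩
end

section
/- For every finite graph G, the 1-WL color of a vertex at iteration i is determined by the isomorphism type of the depth-i unrolled tree: for vertices u, v ∈ V(G), C^1_i(u) = C^1_i(v) if and only if the unrolled trees U^i_{G,u} and U^i_{G,v} are isomorphic as rooted trees (mapping root to root). -/
/-!
The colour `C_i(v)` and the depth-`i` unrolled tree at `v` determine each other, by recursion
on `i`. Dropping the first component of `C_{i+1}(v)` leaves the multiset of the neighbours'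
colours `C_i(w)`, which by induction give the subtrees hanging off the root. Conversely, truncating
the depth-`(i+1)` tree at `v` to depth `i` recovers `C_i(v)`, and its subtrees recover the
neighbours' colours `C_i(w)`.
-/

def Col1.toU {L : Type} : (i : ℕ) → Col1 L i → U i
  | 0, _ => ()
  | i+1, c => c.2.map (Col1.toU i)

def U.trunc : (i : ℕ) → U (i+1) → U i
  | 0, _ => ()
  | i+1, t => t.map (U.trunc i)

def U.toCol1 {L : Type} (a : L) : (i : ℕ) → U i → Col1 L i
  | 0, _ => a
  | i+1, t => (U.toCol1 a i (U.trunc i t), t.map (U.toCol1 a i))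

section

variable {V : Type} [Fintype V] [DecidableEq V] (G : SimpleGraph V) [DecidableRel G.Adj]

theorem U.trunc_unroll (i : ℕ) (v : V) : U.trunc i (unroll G (i+1) v) = unroll G i v := by
  induction i generalizing v with
  | zero => rfl
  | succ i ih =>
    rw [unroll, unroll]
    simp only [U.trunc, Multiset.map_map]
    exact Multiset.map_congr rfl fun w _ => ih w

theorem Col1.toU_oneWL {L : Type} (l : V → L) (i : ℕ) (v : V) :
    Col1.toU i (oneWL G l i v) = unroll G i v := by
  induction i generalizing v with
  | zero => rfl
  | succ i ih =>
    simp only [Col1.toU, oneWL, unroll, Multiset.map_map]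
    exact Multiset.map_congr rfl fun w _ => ih w

theorem U.toCol1_unroll {L : Type} (a : L) (i : ℕ) (v : V) :
    U.toCol1 a i (unroll G i v) = oneWL G (fun _ => a) i v := by
  induction i generalizing v with
  | zero => rfl
  | succ i ih =>
    simp only [U.toCol1, oneWL]
    rw [U.trunc_unroll, ih, unroll, Multiset.map_map]
    exact congrArg _ (Multiset.map_congr rfl fun w _ => ih w)

end

/-- `unroll G i v` is a canonical encoding: two encodings are equal exactly when the rooted
trees are isomorphic. -/
theorem stmt19 {V : Type} [Fintype V] [DecidableEq V]
    (G : SimpleGraph V) [DecidableRel G.Adj] :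
    ∀ (i : ℕ) (u v : V),
      oneWL G (fun _ => ()) i u = oneWL G (fun _ => ()) i v ↔ unroll G i u = unroll G i v := by
  intro i u v
  constructor
  · intro h
    rw [← Col1.toU_oneWL G _ i u, ← Col1.toU_oneWL G _ i v, h]
  · intro h
    rw [← U.toCol1_unroll G () i u, ← U.toCol1_unroll G () i v, h]
end
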